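/- arXiv:2306.11719 — 2 statements merged into one kernel-verified Lean document; each statement's English description precedes it below -/
import Mathlib

section
/- In the forward diffusion process, the conditional distribution of X_{t-1} given X_t = x_t and X_0 = x_0 is Gaussian with mean (sqrt(ᾱ_{t-1})β_t/(1-ᾱ_t))·x_0 + (sqrt(α_t)(1-ᾱ_{t-1})/(1-ᾱ_t))·x_t and covariance ((1-ᾱ_{t-1})β_t/(1-ᾱ_t))·I. -/
open MeasureTheory ProbabilityTheory Real
open scoped NNReal ENNReal

noncomputable def gaussianPi {d : ℕ} (μ : Fin d → ℝ) (v : NNReal) : Measure (Fin d → ℝ) :=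
  Measure.pi (fun i => gaussianReal (μ i) v)

instance gaussianPi.instIsProbabilityMeasure {d : ℕ} (μ : Fin d → ℝ) (v : NNReal) :
    IsProbabilityMeasure (gaussianPi μ v) := by
  unfold gaussianPi; infer_instance

section OneDim

lemma pdf_exp_identity {v₁ v₂ s' τ : ℝ} (hv₁ : 0 < v₁) (hv₂ : 0 < v₂) {c ρ : ℝ}
    (hs : s' = c^2*v₁ + v₂) (hρ : ρ = c*v₁/s') (hτ : τ = v₁*v₂/s') (v w : ℝ) :
    (v - c*(w + ρ*v))^2/(2*v₂) + (w + ρ*v)^2/(2*v₁) = v^2/(2*s') + w^2/(2*τ) := by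
  have hs' : 0 < s' := by nlinarith [sq_nonneg c]
  subst hρ hτ hs
  field_simp
  ring

lemma pdf_prod_identity (v₁ v₂ s' τ : ℝ≥0) (hv₁ : v₁ ≠ 0) (hv₂ : v₂ ≠ 0) (c ρ : ℝ)
    (hs : (s' : ℝ) = c^2*v₁ + v₂) (hρ : ρ = c*v₁/s') (hτ : (τ:ℝ) = v₁*v₂/s') (v w : ℝ) :
    gaussianPDF (c*(w + ρ*v)) v₂ v * gaussianPDF 0 v₁ (w + ρ*v)
      = gaussianPDF 0 s' v * gaussianPDF 0 τ w := by
  have hv₁' : (0:ℝ) < v₁ := lt_of_le_of_ne v₁.coe_nonneg (by exact_mod_cast (Ne.symm hv₁))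
  have hv₂' : (0:ℝ) < v₂ := lt_of_le_of_ne v₂.coe_nonneg (by exact_mod_cast (Ne.symm hv₂))
  have hs' : (0:ℝ) < s' := by nlinarith [sq_nonneg c]
  have hτ' : (0:ℝ) < τ := by rw [hτ]; positivity
  simp only [gaussianPDF, ← ENNReal.ofReal_mul (gaussianPDFReal_nonneg _ _ _)]
  congr 1
  simp only [gaussianPDFReal, sub_zero]
  rw [mul_mul_mul_comm, mul_mul_mul_comm ((Real.sqrt (2*π*(s':ℝ)))⁻¹), ← Real.exp_add,
    ← Real.exp_add, ← mul_inv, ← mul_inv, ← Real.sqrt_mul (by positivity),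
    ← Real.sqrt_mul (by positivity)]
  have hconst : (2*π*(v₂:ℝ)) * (2*π*(v₁:ℝ)) = (2*π*(s':ℝ)) * (2*π*(τ:ℝ)) := by
    have : (s':ℝ) * τ = v₁ * v₂ := by rw [hτ]; field_simp
    linear_combination (-4*π^2)*this
  have hexp : -(v - c*(w + ρ*v))^2/(2*(v₂:ℝ)) + -(w + ρ*v)^2/(2*(v₁:ℝ))
      = -v^2/(2*(s':ℝ)) + -w^2/(2*(τ:ℝ)) := by
    have h := pdf_exp_identity hv₁' hv₂' hs hρ hτ v w
    simp only [neg_div]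
    linarith [h]
  rw [hconst, hexp]

lemma measurable_gaussianPDF2 (c : ℝ) (v : ℝ≥0) :
    Measurable (fun p : ℝ × ℝ => gaussianPDF (c * p.1) v p.2) := by
  unfold gaussianPDF gaussianPDFReal
  apply Measurable.ennreal_ofReal
  fun_prop

lemma gaussian_pair_map (v₁ v₂ s' τ : ℝ≥0) (c ρ : ℝ) (hv₂ : v₂ ≠ 0)
    (hs : (s' : ℝ) = c^2 * v₁ + v₂)
    (hρ : ρ = c * v₁ / s')
    (hτ : (τ : ℝ) = v₁ * v₂ / s') :
    ((gaussianReal 0 v₁).prod (gaussianReal 0 v₂)).map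
      (fun p : ℝ × ℝ => (c * p.1 + p.2, p.1 - ρ * (c * p.1 + p.2)))
    = (gaussianReal 0 s').prod (gaussianReal 0 τ) := by
  have hv₂' : (0:ℝ) < v₂ := NNReal.coe_pos.mpr (pos_iff_ne_zero.mpr hv₂)
  have hf : Measurable (fun p : ℝ × ℝ => (c * p.1 + p.2, p.1 - ρ * (c * p.1 + p.2))) := by
    fun_prop
  by_cases h1 : v₁ = 0
  · subst h1
    have hρ0 : ρ = 0 := by rw [hρ]; simp
    have hτ0 : τ = 0 := by
      have : (τ:ℝ) = 0 := by rw [hτ]; simp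
      exact_mod_cast this
    have hs'v : s' = v₂ := by
      have : (s':ℝ) = v₂ := by rw [hs]; simp
      exact_mod_cast this
    subst hρ0 hτ0 hs'v
    rw [gaussianReal_zero_var, Measure.dirac_prod, Measure.map_map hf measurable_prodMk_left]
    have : ((fun p : ℝ × ℝ => (c * p.1 + p.2, p.1 - 0 * (c * p.1 + p.2))) ∘ (Prod.mk (0:ℝ)))
        = fun x : ℝ => (x, (0:ℝ)) := by
      ext e <;> simp
    rw [this, Measure.prod_dirac]
  -- main case
  have hv₁' : (0:ℝ) < v₁ := NNReal.coe_pos.mpr (pos_iff_ne_zero.mpr h1)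
  have hs'pos : (0:ℝ) < s' := by rw [hs]; positivity
  have hs'0 : s' ≠ 0 := by
    intro h; rw [h] at hs'pos; simp at hs'pos
  have hτpos : (0:ℝ) < τ := by rw [hτ]; positivity
  have hτ0 : τ ≠ 0 := by
    intro h; rw [h] at hτpos; simp at hτpos
  refine (Measure.prod_eq fun s t hms hmt => ?_).symm
  rw [Measure.map_apply hf (hms.prod hmt), Measure.prod_apply (hf (hms.prod hmt))]
  have hBz : ∀ z : ℝ, MeasurableSet (s ∩ {v : ℝ | z - ρ*v ∈ t}) := fun z =>
    hms.inter ((measurable_const.sub (measurable_id.const_mul ρ)) hmt)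
  -- inner measure as lintegral
  have hinner : ∀ z : ℝ,
      (gaussianReal 0 v₂) (Prod.mk z ⁻¹'
        ((fun p : ℝ × ℝ => (c * p.1 + p.2, p.1 - ρ * (c * p.1 + p.2))) ⁻¹' (s ×ˢ t)))
      = ∫⁻ v, s.indicator (fun _ => (1:ℝ≥0∞)) v
          * t.indicator (fun _ => (1:ℝ≥0∞)) (z - ρ*v) * gaussianPDF (c*z) v₂ v := by
    intro z
    have hset : (Prod.mk z ⁻¹'
        ((fun p : ℝ × ℝ => (c * p.1 + p.2, p.1 - ρ * (c * p.1 + p.2))) ⁻¹' (s ×ˢ t)))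
        = (fun e => c*z + e) ⁻¹' (s ∩ {v : ℝ | z - ρ*v ∈ t}) := by
      ext e; simp [Set.mem_prod]
    rw [hset, ← Measure.map_apply (measurable_const_add (c*z)) (hBz z),
      gaussianReal_map_const_add, zero_add, gaussianReal_apply _ hv₂,
      ← lintegral_indicator (hBz z) _]
    congr 1; ext v
    by_cases hv : v ∈ s <;> by_cases hw : z - ρ*v ∈ t <;>
      simp [Set.indicator, hv, hw]
  rw [lintegral_congr hinner]
  -- joint measurability
  have hFmeas : Measurable (fun p : ℝ × ℝ =>
      s.indicator (fun _ => (1:ℝ≥0∞)) p.2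
        * t.indicator (fun _ => (1:ℝ≥0∞)) (p.1 - ρ*p.2) * gaussianPDF (c*p.1) v₂ p.2) := by
    refine Measurable.mul (Measurable.mul ?_ ?_) (measurable_gaussianPDF2 c v₂)
    · exact (measurable_one.indicator hms).comp measurable_snd
    · exact (measurable_one.indicator hmt).comp (measurable_fst.sub (measurable_snd.const_mul ρ))
  have hFz : ∀ z : ℝ, Measurable (fun v =>
      s.indicator (fun _ => (1:ℝ≥0∞)) v
        * t.indicator (fun _ => (1:ℝ≥0∞)) (z - ρ*v) * gaussianPDF (c*z) v₂ v) := fun z =>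
    hFmeas.comp measurable_prodMk_left
  have hintmeas : Measurable (fun z => ∫⁻ v, s.indicator (fun _ => (1:ℝ≥0∞)) v
      * t.indicator (fun _ => (1:ℝ≥0∞)) (z - ρ*v) * gaussianPDF (c*z) v₂ v ∂volume) :=
    Measurable.lintegral_prod_right' (f := fun p : ℝ × ℝ => _) hFmeas
  rw [gaussianReal_of_var_ne_zero 0 h1,
    lintegral_withDensity_eq_lintegral_mul volume (measurable_gaussianPDF 0 v₁) hintmeas]
  simp only [Pi.mul_apply]
  rw [lintegral_congr (fun z => (lintegral_const_mul _ (hFz z)).symm)]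
  rw [lintegral_lintegral_swap]
  swap
  · exact (Measurable.mul ((measurable_gaussianPDF 0 v₁).comp measurable_fst) hFmeas).aemeasurable
  -- slice computation
  have htint : ∫⁻ w, t.indicator (fun _ => (1:ℝ≥0∞)) w * gaussianPDF 0 τ w ∂volume
      = gaussianReal 0 τ t := by
    rw [gaussianReal_apply _ hτ0, ← lintegral_indicator hmt _]
    congr 1; ext w; by_cases hw : w ∈ t <;> simp [hw]
  have hslice : ∀ v : ℝ, (∫⁻ z, gaussianPDF 0 v₁ z
      * (s.indicator (fun _ => (1:ℝ≥0∞)) v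
        * t.indicator (fun _ => (1:ℝ≥0∞)) (z - ρ*v) * gaussianPDF (c*z) v₂ v) ∂volume)
      = (s.indicator (fun _ => (1:ℝ≥0∞)) v * gaussianPDF 0 s' v) * gaussianReal 0 τ t := by
    intro v
    have key := (measurePreserving_add_right volume (ρ*v)).lintegral_comp
      (f := fun z : ℝ => gaussianPDF 0 v₁ z
        * (s.indicator (fun _ => (1:ℝ≥0∞)) v
          * t.indicator (fun _ => (1:ℝ≥0∞)) (z - ρ*v) * gaussianPDF (c*z) v₂ v))
      ((measurable_gaussianPDF 0 v₁).mul (hFmeas.comp measurable_prodMk_right))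
    rw [← key]
    have hpt : ∀ w : ℝ, gaussianPDF 0 v₁ (w + ρ*v)
        * (s.indicator (fun _ => (1:ℝ≥0∞)) v
          * t.indicator (fun _ => (1:ℝ≥0∞)) ((w + ρ*v) - ρ*v) * gaussianPDF (c*(w + ρ*v)) v₂ v)
        = (s.indicator (fun _ => (1:ℝ≥0∞)) v * gaussianPDF 0 s' v)
          * (t.indicator (fun _ => (1:ℝ≥0∞)) w * gaussianPDF 0 τ w) := by
      intro w
      have harg : w + ρ*v - ρ*v = w := by ring
      rw [harg]
      by_cases hv' : v ∈ s <;> by_cases hw : w ∈ t <;>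
        simp [Set.indicator, hv', hw]
      rw [mul_comm]
      exact pdf_prod_identity v₁ v₂ s' τ h1 hv₂ c ρ hs hρ hτ v w
    rw [lintegral_congr hpt,
      lintegral_const_mul (f := fun w => t.indicator (fun _ => (1:ℝ≥0∞)) w * gaussianPDF 0 τ w)
        (s.indicator (fun _ => (1:ℝ≥0∞)) v * gaussianPDF 0 s' v)
        ((measurable_one.indicator hmt).mul (measurable_gaussianPDF 0 τ)),
      htint]
  rw [lintegral_congr hslice]
  rw [lintegral_mul_const ((gaussianReal 0 τ) t)
    (f := fun a => s.indicator (fun _ => (1:ℝ≥0∞)) a * gaussianPDF 0 s' a)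
    ((measurable_one.indicator hms).mul (measurable_gaussianPDF 0 s'))]
  congr 1
  rw [gaussianReal_apply _ hs'0, ← lintegral_indicator hms _]
  congr 1; ext v; by_cases hv : v ∈ s <;> simp [hv]

lemma gaussian_pair_map' (v₁ v₂ s' τ : ℝ≥0) (c b ρ : ℝ) (hb : b ≠ 0) (hv₂ : v₂ ≠ 0)
    (hs : (s' : ℝ) = c^2*v₁ + b^2*v₂) (hρ : ρ = c*v₁/s')
    (hτ : (τ:ℝ) = (v₁:ℝ)*(b^2*v₂)/s') :
    ((gaussianReal 0 v₁).prod (gaussianReal 0 v₂)).map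
      (fun p : ℝ×ℝ => (c*p.1 + b*p.2, p.1 - ρ*(c*p.1 + b*p.2)))
    = (gaussianReal 0 s').prod (gaussianReal 0 τ) := by
  set bsq : ℝ≥0 := ⟨b^2, sq_nonneg b⟩ with hbsqdef
  have hb2 : bsq ≠ 0 := by
    intro h
    apply pow_ne_zero 2 hb
    have := congrArg NNReal.toReal h
    exact this
  have h2 : bsq * v₂ ≠ 0 := mul_ne_zero hb2 hv₂
  have hcoe : ((bsq * v₂ : ℝ≥0) : ℝ) = b^2*v₂ := by
    rw [NNReal.coe_mul]; rfl
  have key := gaussian_pair_map v₁ (bsq * v₂) s' τ c ρ h2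
    (by rw [hcoe]; exact hs) hρ (by rw [hcoe]; exact hτ)
  have hmap : ((gaussianReal 0 v₁).prod (gaussianReal 0 v₂)).map (Prod.map id (b * ·))
      = (gaussianReal 0 v₁).prod (gaussianReal 0 (bsq * v₂)) := by
    rw [← Measure.map_prod_map _ _ measurable_id (measurable_const_mul b),
      Measure.map_id, gaussianReal_map_const_mul, mul_zero]
    rfl
  have hf1 : Measurable (fun p : ℝ × ℝ => (c * p.1 + p.2, p.1 - ρ * (c * p.1 + p.2))) := by
    fun_prop
  have hf2 : Measurable (Prod.map (id : ℝ → ℝ) (b * ·)) :=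
    measurable_id.prodMap (measurable_id.const_mul b)
  rw [← hmap, Measure.map_map hf1 hf2] at key
  exact key

lemma gaussian_lincomb_map (v₁ v₂ s' : ℝ≥0) (c b : ℝ) (hb : b ≠ 0) (hv₂ : v₂ ≠ 0)
    (hs : (s':ℝ) = c^2*v₁ + b^2*v₂) :
    ((gaussianReal 0 v₁).prod (gaussianReal 0 v₂)).map (fun p : ℝ×ℝ => c*p.1 + b*p.2)
      = gaussianReal 0 s' := by
  have hv2pos : (0:ℝ) < v₂ := NNReal.coe_pos.mpr (pos_iff_ne_zero.mpr hv₂)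
  have hbsqpos : (0:ℝ) < b^2 := lt_of_le_of_ne (sq_nonneg b) (Ne.symm (pow_ne_zero 2 hb))
  have hs'pos : (0:ℝ) < s' := by
    rw [hs]; nlinarith [sq_nonneg c, v₁.coe_nonneg, mul_pos hbsqpos hv2pos]
  set τ : ℝ≥0 := Real.toNNReal ((v₁:ℝ)*(b^2*(v₂:ℝ))/(s':ℝ)) with hτdef
  have hτ : (τ:ℝ) = (v₁:ℝ)*(b^2*(v₂:ℝ))/(s':ℝ) :=
    Real.coe_toNNReal _ (by positivity)
  have key := gaussian_pair_map' v₁ v₂ s' τ c b (c*v₁/s') hb hv₂ hs rfl hτ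
  have hpair : Measurable (fun p : ℝ×ℝ => (c*p.1 + b*p.2, p.1 - (c*v₁/s')*(c*p.1 + b*p.2))) := by
    fun_prop
  have := congrArg (Measure.map Prod.fst) key
  rw [Measure.map_map measurable_fst hpair, Measure.map_fst_prod] at this
  simpa [Function.comp_def] using this

end OneDim

section DDim

variable {d : ℕ}

lemma pi_dirac_zero : (Measure.pi fun _ : Fin d => Measure.dirac (0:ℝ))
    = Measure.dirac (0 : Fin d → ℝ) := by
  refine Measure.pi_eq fun B hB => ?_
  rw [Measure.dirac_apply' _ (MeasurableSet.univ_pi hB)]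
  by_cases h : ∀ i, (0:ℝ) ∈ B i
  · have h0 : (0 : Fin d → ℝ) ∈ Set.pi Set.univ B := fun i _ => h i
    rw [Set.indicator_of_mem h0]
    have : ∀ i, Measure.dirac (0:ℝ) (B i) = 1 := fun i => by
      rw [Measure.dirac_apply' _ (hB i), Set.indicator_of_mem (h i)]; rfl
    simp [this]
  · push_neg at h
    obtain ⟨j, hj⟩ := h
    have h0 : (0 : Fin d → ℝ) ∉ Set.pi Set.univ B := by
      intro hc; exact hj (hc j (Set.mem_univ j))
    rw [Set.indicator_of_notMem h0]
    have : Measure.dirac (0:ℝ) (B j) = 0 := by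
      rw [Measure.dirac_apply' _ (hB j), Set.indicator_of_notMem hj]
    exact (Finset.prod_eq_zero (Finset.mem_univ j) this).symm

lemma gaussianPi_zero_var : gaussianPi (d := d) 0 0 = Measure.dirac 0 := by
  unfold gaussianPi
  simp only [Pi.zero_apply, gaussianReal_zero_var]
  exact pi_dirac_zero

lemma gaussianPi_pi (v : ℝ≥0) :
    gaussianPi (d := d) 0 v = Measure.pi (fun _ : Fin d => gaussianReal 0 v) := rfl

lemma gaussianPi_shift (v : ℝ≥0) (m : Fin d → ℝ) :
    (gaussianPi (d := d) 0 v).map (fun x => m + x) = gaussianPi m v := by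
  exact (measurePreserving_pi (fun _ : Fin d => gaussianReal 0 v)
    (fun i => gaussianReal (m i) v)
    (fun i => ⟨measurable_const_add (m i), by rw [gaussianReal_map_const_add, zero_add]⟩)).map_eq

lemma pi_pair_lift {μ ν μ' ν' : Measure ℝ} [IsProbabilityMeasure μ] [IsProbabilityMeasure ν]
    [IsProbabilityMeasure μ'] [IsProbabilityMeasure ν']
    {f : ℝ×ℝ → ℝ×ℝ} (hfm : Measurable f) (hf : (μ.prod ν).map f = μ'.prod ν') :
    ((Measure.pi fun _ : Fin d => μ).prod (Measure.pi fun _ : Fin d => ν)).map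
      (fun q : (Fin d → ℝ) × (Fin d → ℝ) =>
        ((fun i => (f (q.1 i, q.2 i)).1), (fun i => (f (q.1 i, q.2 i)).2)))
    = (Measure.pi fun _ : Fin d => μ').prod (Measure.pi fun _ : Fin d => ν') := by
  have h1 := (measurePreserving_arrowProdEquivProdArrow ℝ ℝ (Fin d)
    (fun _ => μ) (fun _ => ν)).symm
  have h2 := measurePreserving_pi (fun _ : Fin d => μ.prod ν) (fun _ : Fin d => μ'.prod ν')
    (fun i => ⟨hfm, hf⟩)
  have h3 := measurePreserving_arrowProdEquivProdArrow ℝ ℝ (Fin d)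
    (fun _ => μ') (fun _ => ν')
  exact (h3.comp (h2.comp h1)).map_eq

lemma pi_lincomb_lift {μ ν κ : Measure ℝ} [IsProbabilityMeasure μ] [IsProbabilityMeasure ν]
    [IsProbabilityMeasure κ]
    {f : ℝ×ℝ → ℝ} (hfm : Measurable f) (hf : (μ.prod ν).map f = κ) :
    ((Measure.pi fun _ : Fin d => μ).prod (Measure.pi fun _ : Fin d => ν)).map
      (fun q : (Fin d → ℝ) × (Fin d → ℝ) => (fun i => f (q.1 i, q.2 i)))
    = Measure.pi fun _ : Fin d => κ := by
  have h1 := (measurePreserving_arrowProdEquivProdArrow ℝ ℝ (Fin d)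
    (fun _ => μ) (fun _ => ν)).symm
  have h2 := measurePreserving_pi (fun _ : Fin d => μ.prod ν) (fun _ : Fin d => κ)
    (fun i => ⟨hfm, hf⟩)
  exact (h2.comp h1).map_eq

lemma gaussianPi_pair (v₁ v₂ s' τ : ℝ≥0) (c b ρ : ℝ) (hb : b ≠ 0) (hv₂ : v₂ ≠ 0)
    (hs : (s' : ℝ) = c^2*v₁ + b^2*v₂) (hρ : ρ = c*v₁/s')
    (hτ : (τ:ℝ) = (v₁:ℝ)*(b^2*v₂)/s') :
    ((gaussianPi (d := d) 0 v₁).prod (gaussianPi 0 v₂)).map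
      (fun q : (Fin d → ℝ) × (Fin d → ℝ) =>
        (c • q.1 + b • q.2, q.1 - ρ • (c • q.1 + b • q.2)))
    = (gaussianPi 0 s').prod (gaussianPi 0 τ) := by
  have hfm : Measurable (fun p : ℝ×ℝ => (c*p.1 + b*p.2, p.1 - ρ*(c*p.1 + b*p.2))) := by fun_prop
  exact pi_pair_lift hfm (gaussian_pair_map' v₁ v₂ s' τ c b ρ hb hv₂ hs hρ hτ)

lemma gaussianPi_lincomb (v₁ v₂ s' : ℝ≥0) (c b : ℝ) (hb : b ≠ 0) (hv₂ : v₂ ≠ 0)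
    (hs : (s':ℝ) = c^2*v₁ + b^2*v₂) :
    ((gaussianPi (d := d) 0 v₁).prod (gaussianPi 0 v₂)).map
      (fun q : (Fin d → ℝ) × (Fin d → ℝ) => c • q.1 + b • q.2)
    = gaussianPi 0 s' := by
  have hfm : Measurable (fun p : ℝ×ℝ => c*p.1 + b*p.2) := by fun_prop
  exact pi_lincomb_lift hfm (gaussian_lincomb_map v₁ v₂ s' c b hb hv₂ hs)

end DDim

set_option maxHeartbeats 2000000 in
/-- In the forward diffusion process, the conditional distribution of `X_{t-1}` given
`X_t = x_t` and `X_0 = x_0` is Gaussian with mean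
`(√ᾱ_{t-1}·β_t/(1-ᾱ_t))·x_0 + (√α_t·(1-ᾱ_{t-1})/(1-ᾱ_t))·x_t` and covariance
`((1-ᾱ_{t-1})·β_t/(1-ᾱ_t))·I`, where `α_s = 1-β_s` and `ᾱ_s = ∏_{r≤s} α_r`. -/
theorem stmt2 {d : ℕ} [NeZero d] {Ω : Type*} [MeasurableSpace Ω] (P : Measure Ω)
    [IsProbabilityMeasure P]
    (β : ℕ → ℝ) (hβ : ∀ t, β t ∈ Set.Ioo (0 : ℝ) 1)
    (X0 : Ω → Fin d → ℝ) (hX0meas : Measurable X0)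
    (ε : ℕ → Ω → Fin d → ℝ) (hεmeas : ∀ t, Measurable (ε t))
    (hεlaw : ∀ t, P.map (ε t) = gaussianPi 0 1)
    -- `X0` and the `ε_t` are jointly independent:
    (hindep : iIndepFun
      (m := fun _ : Option ℕ => (inferInstance : MeasurableSpace (Fin d → ℝ)))
      (fun i : Option ℕ => Option.rec X0 ε i) P)
    (X : ℕ → Ω → Fin d → ℝ) (hX0' : X 0 = X0)
    (hXrec : ∀ t, X (t + 1) =
      fun ω => Real.sqrt (1 - β (t + 1)) • X t ω + Real.sqrt (β (t + 1)) • ε (t + 1) ω)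
    (t : ℕ) (ht : 1 ≤ t) :
    ∀ᵐ p ∂(P.map fun ω => (X t ω, X 0 ω)),
      condDistrib (X (t - 1)) (fun ω => (X t ω, X 0 ω)) P p =
        gaussianPi
          ((Real.sqrt (∏ s ∈ Finset.Icc 1 (t - 1), (1 - β s)) * β t /
              (1 - ∏ s ∈ Finset.Icc 1 t, (1 - β s))) • p.2 +
           (Real.sqrt (1 - β t) * (1 - ∏ s ∈ Finset.Icc 1 (t - 1), (1 - β s)) /
              (1 - ∏ s ∈ Finset.Icc 1 t, (1 - β s))) • p.1)
          (Real.toNNReal ((1 - ∏ s ∈ Finset.Icc 1 (t - 1), (1 - β s)) * β t /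
              (1 - ∏ s ∈ Finset.Icc 1 t, (1 - β s)))) := by
  subst hX0'
  obtain ⟨s, rfl⟩ : ∃ s, t = s + 1 := ⟨t - 1, by omega⟩
  clear ht
  simp only [Nat.add_sub_cancel]
  -- abbreviations
  set abar : ℕ → ℝ := fun n => ∏ r ∈ Finset.Icc 1 n, (1 - β r) with habar_def
  have habar_pos : ∀ n, 0 < abar n := fun n =>
    Finset.prod_pos fun r _ => by linarith [(hβ r).2]
  have habar_le : ∀ n, abar n ≤ 1 := fun n =>
    Finset.prod_le_one (fun r _ => by linarith [(hβ r).2]) (fun r _ => by linarith [(hβ r).1])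
  have habar_zero : abar 0 = 1 := by simp [habar_def]
  have habar_succ : ∀ n, abar (n+1) = abar n * (1 - β (n+1)) := fun n => by
    simp only [habar_def]
    exact Finset.prod_Icc_succ_top (Nat.le_add_left 1 n) _
  set σn : ℕ → ℝ≥0 := fun n => Real.toNNReal (1 - abar n) with hσn_def
  have hσ : ∀ n, ((σn n : ℝ≥0) : ℝ) = 1 - abar n := fun n =>
    Real.coe_toNNReal _ (by linarith [habar_le n])
  -- measurability of the process
  have hXm : ∀ n, Measurable (X n) := by
    intro n; induction n with
    | zero => exact hX0meas
    | succ n ih =>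
      rw [hXrec n]
      exact ((measurable_const_smul _).comp ih).add
        ((measurable_const_smul _).comp (hεmeas (n+1)))
  -- sigma algebras
  set mc : Option ℕ → MeasurableSpace Ω :=
    fun i => MeasurableSpace.comap (Option.rec (X 0) ε i) inferInstance with hmc_def
  have hfam : ∀ i : Option ℕ, Measurable (Option.rec (X 0) ε i : Ω → Fin d → ℝ) := fun i => by
    cases i with
    | none => exact hX0meas
    | some r => exact hεmeas r
  have hle : ∀ i, mc i ≤ (inferInstance : MeasurableSpace Ω) := fun i => (hfam i).comap_le
  set M : ℕ → MeasurableSpace Ω :=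
    fun n => ⨆ i ∈ (insert none (some '' Set.Icc 1 n) : Set (Option ℕ)), mc i with hM_def
  have hMX0 : ∀ n, Measurable[M n] (X 0) := fun n =>
    Measurable.of_comap_le (le_biSup mc (Set.mem_insert none _))
  have hMε : ∀ n r, 1 ≤ r → r ≤ n → Measurable[M n] (ε r) := fun n r h1 h2 =>
    Measurable.of_comap_le (le_biSup mc (Set.mem_insert_of_mem _ (Set.mem_image_of_mem some (Set.mem_Icc.mpr ⟨h1, h2⟩))))
  have hMmono : ∀ n, M n ≤ M (n+1) := fun n => by
    simp only [hM_def]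
    exact biSup_mono (Set.insert_subset_insert
      (Set.image_mono (Set.Icc_subset_Icc_right (by omega))))
  have hMXn : ∀ n, Measurable[M n] (X n) := by
    intro n; induction n with
    | zero => exact hMX0 0
    | succ n ih =>
      rw [hXrec n]
      exact ((measurable_const_smul _).comp (ih.mono (hMmono n) le_rfl)).add
        ((measurable_const_smul _).comp (hMε (n+1) (n+1) (by omega) le_rfl))
  -- independence of (X 0, X n) and ε m for n < m
  have hPairIndep : ∀ n m, n < m → IndepFun (fun ω => (X 0 ω, X n ω)) (ε m) P := by
    intro n m hnm
    have hd : Disjoint (insert none (some '' Set.Icc 1 n) : Set (Option ℕ))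
        {some m} := by
      rw [Set.disjoint_singleton_right]
      simp only [Set.mem_insert_iff, Set.mem_image, Set.mem_Icc]
      push_neg
      refine ⟨by simp, ?_⟩
      rintro x ⟨h1x, h2x⟩ hxm
      have : x = m := Option.some.inj hxm
      omega
    have hind := indep_iSup_of_disjoint hle hindep hd
    have hsingle : (⨆ i ∈ ({some m} : Set (Option ℕ)), mc i) = mc (some m) := by simp
    rw [hsingle] at hind
    have hpairm : Measurable[M n] (fun ω => (X 0 ω, X n ω)) := (hMX0 n).prodMk (hMXn n)
    exact indep_of_indep_of_le_left hind hpairm.comap_le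
  have hPairLaw : ∀ n m, n < m → P.map (fun ω => ((X 0 ω, X n ω), ε m ω))
      = (P.map (fun ω => (X 0 ω, X n ω))).prod (gaussianPi 0 1) := by
    intro n m hnm
    have h := (indepFun_iff_map_prod_eq_prod_map_map
      ((hX0meas.prodMk (hXm n)).aemeasurable) (hεmeas m).aemeasurable).mp
      (hPairIndep n m hnm)
    rwa [hεlaw m] at h
  haveI hμ0 : IsProbabilityMeasure (P.map (X 0)) :=
    Measure.isProbabilityMeasure_map hX0meas.aemeasurable
  -- law of the triple ((X0, Z_n), ε m)
  have hZE : ∀ n m, n < m →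
      P.map (fun ω => (X 0 ω, X n ω - Real.sqrt (abar n) • X 0 ω))
        = (P.map (X 0)).prod (gaussianPi 0 (σn n)) →
      P.map (fun ω => ((X 0 ω, X n ω - Real.sqrt (abar n) • X 0 ω), ε m ω))
        = ((P.map (X 0)).prod (gaussianPi 0 (σn n))).prod (gaussianPi 0 1) := by
    intro n m hnm hZn
    have hT : Measurable (fun q : (Fin d → ℝ) × (Fin d → ℝ) =>
        (q.1, q.2 - Real.sqrt (abar n) • q.1)) := by fun_prop
    have h := congrArg (Measure.map
      (Prod.map (fun q : (Fin d → ℝ) × (Fin d → ℝ) =>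
        (q.1, q.2 - Real.sqrt (abar n) • q.1)) (id : (Fin d → ℝ) → Fin d → ℝ)))
      (hPairLaw n m hnm)
    rw [Measure.map_map (hT.prodMap measurable_id)
        ((hX0meas.prodMk (hXm n)).prodMk (hεmeas m)),
      ← Measure.map_prod_map _ _ hT measurable_id, Measure.map_id,
      Measure.map_map hT (hX0meas.prodMk (hXm n))] at h
    have e1 : ((fun q : (Fin d → ℝ) × (Fin d → ℝ) =>
        (q.1, q.2 - Real.sqrt (abar n) • q.1)) ∘ fun a => (X 0 a, X n a))
        = fun ω => (X 0 ω, X n ω - Real.sqrt (abar n) • X 0 ω) := rfl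
    rw [e1, hZn] at h
    exact h
  -- law of (X0, Z_n)
  have hZ : ∀ n, P.map (fun ω => (X 0 ω, X n ω - Real.sqrt (abar n) • X 0 ω))
      = (P.map (X 0)).prod (gaussianPi 0 (σn n)) := by
    intro n; induction n with
    | zero =>
      have h0 : (fun ω => (X 0 ω, X 0 ω - Real.sqrt (abar 0) • X 0 ω))
          = fun ω => (X 0 ω, (0 : Fin d → ℝ)) := by
        funext ω; rw [habar_zero, Real.sqrt_one, one_smul, sub_self]
      rw [h0]
      have hσ0 : σn 0 = 0 := by
        have h : ((σn 0 : ℝ≥0) : ℝ) = 0 := by rw [hσ 0, habar_zero]; ring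
        exact_mod_cast h
      rw [hσ0, gaussianPi_zero_var, Measure.prod_dirac]
      exact (Measure.map_map measurable_prodMk_right hX0meas).symm
    | succ n ih =>
      have hβn := hβ (n+1)
      have h1 := hZE n (n+1) (by omega) ih
      have hF : Measurable (fun q : ((Fin d → ℝ) × (Fin d → ℝ)) × (Fin d → ℝ) =>
          (q.1.1, Real.sqrt (1 - β (n+1)) • q.1.2 + Real.sqrt (β (n+1)) • q.2)) := by fun_prop
      have hXn' := hXm n
      have hZnm : Measurable (fun ω => (X 0 ω, X n ω - Real.sqrt (abar n) • X 0 ω)) := by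
        fun_prop
      have h2 := congrArg (Measure.map (fun q : ((Fin d → ℝ) × (Fin d → ℝ)) × (Fin d → ℝ) =>
          (q.1.1, Real.sqrt (1 - β (n+1)) • q.1.2 + Real.sqrt (β (n+1)) • q.2))) h1
      rw [Measure.map_map hF (hZnm.prodMk (hεmeas (n+1)))] at h2
      have hfun : ((fun q : ((Fin d → ℝ) × (Fin d → ℝ)) × (Fin d → ℝ) =>
          (q.1.1, Real.sqrt (1 - β (n+1)) • q.1.2 + Real.sqrt (β (n+1)) • q.2))
          ∘ (fun ω => ((X 0 ω, X n ω - Real.sqrt (abar n) • X 0 ω), ε (n+1) ω)))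
          = fun ω => (X 0 ω, X (n+1) ω - Real.sqrt (abar (n+1)) • X 0 ω) := by
        funext ω
        have hsq : Real.sqrt (abar (n+1)) = Real.sqrt (abar n) * Real.sqrt (1 - β (n+1)) := by
          rw [habar_succ n, Real.sqrt_mul (le_of_lt (habar_pos n))]
        refine Prod.ext rfl ?_
        funext i
        rw [hXrec n]
        simp only [Function.comp_apply, Pi.add_apply, Pi.sub_apply, Pi.smul_apply,
          smul_eq_mul, hsq]
        ring
      rw [hfun] at h2
      -- compute RHS
      have hg : Measurable (fun q : (Fin d → ℝ) × (Fin d → ℝ) =>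
          Real.sqrt (1 - β (n+1)) • q.1 + Real.sqrt (β (n+1)) • q.2) := by fun_prop
      have hassoc := Measure.prodAssoc_prod (μ := P.map (X 0))
        (ν := gaussianPi (d := d) 0 (σn n)) (τ := gaussianPi (d := d) 0 1)
      have hcomp : (fun q : ((Fin d → ℝ) × (Fin d → ℝ)) × (Fin d → ℝ) =>
          (q.1.1, Real.sqrt (1 - β (n+1)) • q.1.2 + Real.sqrt (β (n+1)) • q.2))
          = (Prod.map (id : (Fin d → ℝ) → Fin d → ℝ)
              (fun q : (Fin d → ℝ) × (Fin d → ℝ) =>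
                Real.sqrt (1 - β (n+1)) • q.1 + Real.sqrt (β (n+1)) • q.2))
            ∘ (MeasurableEquiv.prodAssoc :
              (((Fin d → ℝ) × (Fin d → ℝ)) × (Fin d → ℝ)) ≃ᵐ _) := rfl
      rw [hcomp, ← Measure.map_map (measurable_id.prodMap hg)
          MeasurableEquiv.prodAssoc.measurable, hassoc,
        ← Measure.map_prod_map _ _ measurable_id hg, Measure.map_id] at h2
      rw [gaussianPi_lincomb (σn n) 1 (σn (n+1)) _ _
          (Real.sqrt_ne_zero'.mpr hβn.1) one_ne_zero ?_] at h2
      · exact h2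
      · rw [hσ (n+1), hσ n,
          Real.sq_sqrt (by linarith [hβn.2] : (0:ℝ) ≤ 1 - β (n+1)),
          Real.sq_sqrt (le_of_lt hβn.1), habar_succ n]
        push_cast
        ring
  -- ### final assembly
  have hβs := hβ (s+1)
  set aa : ℝ := Real.sqrt (abar s) with haa_def
  set cc : ℝ := Real.sqrt (1 - β (s+1)) with hcc_def
  set bb : ℝ := Real.sqrt (β (s+1)) with hbb_def
  have hcc2 : cc^2 = 1 - β (s+1) := Real.sq_sqrt (by linarith [hβs.2])
  have hbb2 : bb^2 = β (s+1) := Real.sq_sqrt (le_of_lt hβs.1)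
  have hbb0 : bb ≠ 0 := Real.sqrt_ne_zero'.mpr hβs.1
  set D : ℝ := 1 - abar (s+1) with hD_def
  have hDpos : 0 < D := by
    have h2 := habar_pos s; have h3 := habar_le s
    rw [hD_def, habar_succ s]; nlinarith [hβs.1, hβs.2]
  set A : ℝ := aa * β (s+1) / D with hA_def
  set B : ℝ := cc * (1 - abar s) / D with hB_def
  set τv : ℝ≥0 := Real.toNNReal ((1 - abar s) * β (s+1) / D) with hτv_def
  have hτv : ((τv : ℝ≥0) : ℝ) = (1 - abar s) * β (s+1) / D :=
    Real.coe_toNNReal _ (div_nonneg (mul_nonneg (by linarith [habar_le s])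
      (le_of_lt hβs.1)) (le_of_lt hDpos))
  set snn : ℝ≥0 := Real.toNNReal D with hsnn_def
  have hsnn : ((snn : ℝ≥0) : ℝ) = D := Real.coe_toNNReal _ (le_of_lt hDpos)
  have hs_rel : ((snn : ℝ≥0) : ℝ) = cc^2 * (σn s) + bb^2 * 1 := by
    rw [hsnn, hcc2, hbb2, hσ s, hD_def, habar_succ s]; ring
  have hρ_rel : B = cc * (σn s) / snn := by rw [hB_def, hσ s, hsnn]
  have hτ_rel : ((τv : ℝ≥0) : ℝ) = ((σn s : ℝ≥0) : ℝ) * (bb^2 * 1) / snn := by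
    rw [hτv, hσ s, hbb2, hsnn]; ring
  have hLmap := gaussianPi_pair (d := d) (σn s) 1 snn τv cc bb B hbb0 one_ne_zero
    hs_rel hρ_rel hτ_rel
  have law3 := hZE s (s+1) (by omega) (hZ s)
  -- map by Θ
  have hL : Measurable (fun q : (Fin d → ℝ) × (Fin d → ℝ) =>
      (cc • q.1 + bb • q.2, q.1 - B • (cc • q.1 + bb • q.2))) := by fun_prop
  have hXs' := hXm s
  have hXs1' := hXm (s+1)
  have hε1' := hεmeas (s+1)
  have hZsm : Measurable (fun ω => (X 0 ω, X s ω - aa • X 0 ω)) := by fun_prop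
  have htriplem : Measurable (fun ω => ((X 0 ω, X s ω - aa • X 0 ω), ε (s+1) ω)) :=
    hZsm.prodMk (hεmeas (s+1))
  -- step A : associate
  have stepA := congrArg (Measure.map (MeasurableEquiv.prodAssoc :
      (((Fin d → ℝ) × (Fin d → ℝ)) × (Fin d → ℝ)) ≃ᵐ _)) law3
  rw [Measure.map_map MeasurableEquiv.prodAssoc.measurable htriplem,
    Measure.prodAssoc_prod] at stepA
  -- step B : apply id × L
  have stepB := congrArg (Measure.map (Prod.map (id : (Fin d → ℝ) → Fin d → ℝ)
      (fun q : (Fin d → ℝ) × (Fin d → ℝ) =>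
        (cc • q.1 + bb • q.2, q.1 - B • (cc • q.1 + bb • q.2))))) stepA
  rw [Measure.map_map (measurable_id.prodMap hL)
      (MeasurableEquiv.prodAssoc.measurable.comp htriplem),
    ← Measure.map_prod_map _ _ measurable_id hL, Measure.map_id, hLmap] at stepB
  -- step C : de-associate
  have hassoc2 := Measure.prodAssoc_prod (μ := P.map (X 0))
    (ν := gaussianPi (d := d) 0 snn) (τ := gaussianPi (d := d) 0 τv)
  have stepC := congrArg (Measure.map ((MeasurableEquiv.prodAssoc :
      (((Fin d → ℝ) × (Fin d → ℝ)) × (Fin d → ℝ)) ≃ᵐ _).symm)) stepB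
  rw [Measure.map_map MeasurableEquiv.prodAssoc.symm.measurable
      ((measurable_id.prodMap hL).comp
        (MeasurableEquiv.prodAssoc.measurable.comp htriplem)),
    ← hassoc2, MeasurableEquiv.map_symm_map] at stepC
  -- stepC : P.map (fun ω => ((X 0 ω, V ω), W ω)) = (μ₀.prod G_snn).prod G_τv
  have law4 : P.map (fun ω =>
      ((X 0 ω, cc • (X s ω - aa • X 0 ω) + bb • ε (s+1) ω),
        (X s ω - aa • X 0 ω) - B • (cc • (X s ω - aa • X 0 ω) + bb • ε (s+1) ω)))
      = ((P.map (X 0)).prod (gaussianPi 0 snn)).prod (gaussianPi 0 τv) := stepC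
  -- law of (X0, V)
  have law5 : P.map (fun ω => (X 0 ω, cc • (X s ω - aa • X 0 ω) + bb • ε (s+1) ω))
      = (P.map (X 0)).prod (gaussianPi 0 snn) := by
    have hVm : Measurable (fun ω => (X 0 ω,
        (cc • (X s ω - aa • X 0 ω) + bb • ε (s+1) ω,
          (X s ω - aa • X 0 ω) - B • (cc • (X s ω - aa • X 0 ω) + bb • ε (s+1) ω)))) := by
      fun_prop
    have h := congrArg (Measure.map
      (Prod.map (id : (Fin d → ℝ) → Fin d → ℝ)
        (Prod.fst : (Fin d → ℝ) × (Fin d → ℝ) → Fin d → ℝ))) stepB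
    rw [Measure.map_map (measurable_id.prodMap measurable_fst)
        ((measurable_id.prodMap hL).comp
          (MeasurableEquiv.prodAssoc.measurable.comp htriplem)),
      ← Measure.map_prod_map _ _ measurable_id measurable_fst, Measure.map_id,
      Measure.map_fst_prod] at h
    rw [measure_univ, one_smul] at h
    exact h
  -- the pair (X (s+1), X 0)
  have hmm : Measurable (fun q : (Fin d → ℝ) × (Fin d → ℝ) =>
      ((cc * aa) • q.1 + q.2, q.1)) := by fun_prop
  have hABa : A + B * (cc * aa) = aa := by
    have hD0 : D ≠ 0 := ne_of_gt hDpos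
    rw [hA_def, hB_def]
    field_simp
    rw [hD_def, habar_succ s]
    linear_combination (aa * (1 - abar s)) * hcc2
  have hη : (((P.map (X 0)).prod (gaussianPi (d := d) 0 snn)).map
      (fun q : (Fin d → ℝ) × (Fin d → ℝ) => ((cc * aa) • q.1 + q.2, q.1)))
      = P.map (fun ω => (X (s+1) ω, X 0 ω)) := by
    have hVm0 : Measurable (fun ω =>
        (X 0 ω, cc • (X s ω - aa • X 0 ω) + bb • ε (s+1) ω)) := by fun_prop
    rw [← law5, Measure.map_map hmm hVm0]
    congr 1
    funext ω
    refine Prod.ext ?_ rfl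
    funext i
    rw [hXrec s]
    simp only [Function.comp_apply, Pi.add_apply, Pi.sub_apply, Pi.smul_apply, smul_eq_mul]
    ring
  -- the full triple as a map of law4
  have hhh : Measurable (fun q : ((Fin d → ℝ) × (Fin d → ℝ)) × (Fin d → ℝ) =>
      (q.1, (A • q.1.2 + B • q.1.1) + q.2)) := by fun_prop
  have hρ' : P.map (fun ω => ((X (s+1) ω, X 0 ω), X s ω))
      = ((P.map (fun ω => (X (s+1) ω, X 0 ω))).prod (gaussianPi 0 τv)).map
          (fun q : ((Fin d → ℝ) × (Fin d → ℝ)) × (Fin d → ℝ) =>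
            (q.1, (A • q.1.2 + B • q.1.1) + q.2)) := by
    have hVWm : Measurable (fun ω =>
        ((X 0 ω, cc • (X s ω - aa • X 0 ω) + bb • ε (s+1) ω),
          (X s ω - aa • X 0 ω) - B • (cc • (X s ω - aa • X 0 ω) + bb • ε (s+1) ω))) := by
      fun_prop
    have h := congrArg (Measure.map ((fun q : ((Fin d → ℝ) × (Fin d → ℝ)) × (Fin d → ℝ) =>
        (q.1, (A • q.1.2 + B • q.1.1) + q.2))
      ∘ (Prod.map (fun q : (Fin d → ℝ) × (Fin d → ℝ) => ((cc * aa) • q.1 + q.2, q.1))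
          (id : (Fin d → ℝ) → Fin d → ℝ)))) law4
    rw [Measure.map_map (hhh.comp (hmm.prodMap measurable_id)) hVWm] at h
    have hfun2 : (((fun q : ((Fin d → ℝ) × (Fin d → ℝ)) × (Fin d → ℝ) =>
        (q.1, (A • q.1.2 + B • q.1.1) + q.2))
        ∘ (Prod.map (fun q : (Fin d → ℝ) × (Fin d → ℝ) => ((cc * aa) • q.1 + q.2, q.1))
            (id : (Fin d → ℝ) → Fin d → ℝ)))
        ∘ (fun ω =>
          ((X 0 ω, cc • (X s ω - aa • X 0 ω) + bb • ε (s+1) ω),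
            (X s ω - aa • X 0 ω) - B • (cc • (X s ω - aa • X 0 ω) + bb • ε (s+1) ω))))
        = fun ω => ((X (s+1) ω, X 0 ω), X s ω) := by
      funext ω
      refine Prod.ext (Prod.ext ?_ rfl) ?_
      · funext i
        rw [hXrec s]
        simp only [Function.comp_apply, Prod.map_apply, Pi.add_apply, Pi.sub_apply,
          Pi.smul_apply, smul_eq_mul, id_eq]
        ring
      · funext i
        have := hABa
        simp only [Function.comp_apply, Prod.map_apply, Pi.add_apply, Pi.sub_apply,
          Pi.smul_apply, smul_eq_mul, id_eq]
        linear_combination (X 0 ω i) * hABa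
    rw [hfun2] at h
    rw [h, ← Measure.map_map hhh (hmm.prodMap measurable_id),
      ← Measure.map_prod_map _ _ hmm measurable_id, Measure.map_id, hη]
  -- the kernel
  set κ : Kernel ((Fin d → ℝ) × (Fin d → ℝ)) (Fin d → ℝ) :=
    Kernel.map (Kernel.id ×ₖ Kernel.const ((Fin d → ℝ) × (Fin d → ℝ)) (gaussianPi 0 τv))
      (fun q : ((Fin d → ℝ) × (Fin d → ℝ)) × (Fin d → ℝ) => (A • q.1.2 + B • q.1.1) + q.2)
    with hκ_def
  have hmeasadd : Measurable (fun q : ((Fin d → ℝ) × (Fin d → ℝ)) × (Fin d → ℝ) =>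
      (A • q.1.2 + B • q.1.1) + q.2) := by fun_prop
  haveI : IsMarkovKernel κ := by
    rw [hκ_def]
    exact Kernel.IsMarkovKernel.map _ hmeasadd
  have hκval : ∀ p : (Fin d → ℝ) × (Fin d → ℝ), κ p = gaussianPi (A • p.2 + B • p.1) τv := by
    intro p
    rw [hκ_def, Kernel.map_apply _ hmeasadd, Kernel.prod_apply, Kernel.id_apply,
      Kernel.const_apply, Measure.dirac_prod, Measure.map_map hmeasadd measurable_prodMk_left]
    have he : ((fun q : ((Fin d → ℝ) × (Fin d → ℝ)) × (Fin d → ℝ) =>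
        (A • q.1.2 + B • q.1.1) + q.2) ∘ Prod.mk p)
        = fun w => (A • p.2 + B • p.1) + w := rfl
    rw [he]
    exact gaussianPi_shift τv _
  haveI hηProb : IsProbabilityMeasure (P.map (fun ω => (X (s+1) ω, X 0 ω))) :=
    Measure.isProbabilityMeasure_map ((hXm (s+1)).prodMk hX0meas).aemeasurable
  have hcompProd : (P.map (fun ω => (X (s+1) ω, X 0 ω))) ⊗ₘ κ
      = ((P.map (fun ω => (X (s+1) ω, X 0 ω))).prod (gaussianPi 0 τv)).map
          (fun q : ((Fin d → ℝ) × (Fin d → ℝ)) × (Fin d → ℝ) =>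
            (q.1, (A • q.1.2 + B • q.1.1) + q.2)) := by
    ext S hS
    rw [Measure.compProd_apply hS, Measure.map_apply hhh hS, Measure.prod_apply (hhh hS)]
    refine lintegral_congr fun p => ?_
    rw [hκval p, ← gaussianPi_shift τv (A • p.2 + B • p.1),
      Measure.map_apply (measurable_const_add _) (measurable_prodMk_left hS)]
    rfl
  have hbigm : Measurable (fun ω => ((X (s+1) ω, X 0 ω), X s ω)) :=
    ((hXm (s+1)).prodMk hX0meas).prodMk (hXm s)
  haveI : IsProbabilityMeasure (P.map (fun ω => ((X (s+1) ω, X 0 ω), X s ω))) :=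
    Measure.isProbabilityMeasure_map hbigm.aemeasurable
  have hfst : (P.map (fun ω => ((X (s+1) ω, X 0 ω), X s ω))).fst
      = P.map (fun ω => (X (s+1) ω, X 0 ω)) := by
    rw [Measure.fst, Measure.map_map measurable_fst hbigm]
    rfl
  have hmain : P.map (fun ω => ((X (s+1) ω, X 0 ω), X s ω))
      = (P.map (fun ω => ((X (s+1) ω, X 0 ω), X s ω))).fst ⊗ₘ κ := by
    rw [hfst, hcompProd]
    exact hρ'
  have hae := eq_condKernel_of_measure_eq_compProd κ hmain
  rw [hfst] at hae
  have hcd : condDistrib (X s) (fun ω => (X (s+1) ω, X 0 ω)) P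
      = (P.map (fun ω => ((X (s+1) ω, X 0 ω), X s ω))).condKernel := by
    rw [condDistrib]
  filter_upwards [hae] with p hp
  rw [hcd, ← hp, hκval p]
end

section
/- Let S, O be standard Borel spaces, F: S → O an injective measurable map, and let μ, ν be probability measures on S × C (for a standard Borel space C of conditions). If the joint pushforwards under (s,c) ↦ (F(s), c) agree, then for μ-almost-every c, the conditional distributions of S given c under μ and ν agree. -/
open MeasureTheory

/-- Let `S`, `O`, `C` be standard Borel spaces and `F : S → O` an injective measurable map.
If two probability measures `μ, ν` on `S × C` have equal pushforwards under
`(s, c) ↦ (F s, c)`, then for `μ`-almost-every `c` (w.r.t. the marginal on `C`), the regular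
conditional distributions of the signal `S` given `c` under `μ` and `ν` agree. -/
theorem stmt4 {S O C : Type*} [MeasurableSpace S] [StandardBorelSpace S] [Nonempty S]
    [MeasurableSpace O] [StandardBorelSpace O] [MeasurableSpace C] [StandardBorelSpace C]
    (F : S → O) (hFinj : Function.Injective F) (hFmeas : Measurable F)
    (μ ν : Measure (S × C)) [IsProbabilityMeasure μ] [IsProbabilityMeasure ν]
    (h : μ.map (fun p => (F p.1, p.2)) = ν.map (fun p => (F p.1, p.2))) :
    ∀ᵐ c ∂((μ.map Prod.swap).fst),
      (μ.map Prod.swap).condKernel c = (ν.map Prod.swap).condKernel c := by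
  have hF : MeasurableEmbedding F := hFmeas.measurableEmbedding hFinj
  have hmap : MeasurableEmbedding (Prod.map F (id : C → C)) :=
    hF.prodMap MeasurableEmbedding.id
  have hμν : μ = ν := by
    have h' : μ.map (Prod.map F (id : C → C)) = ν.map (Prod.map F (id : C → C)) := by
      exact h
    calc μ = (μ.map (Prod.map F (id : C → C))).comap (Prod.map F id) :=
            (hmap.comap_map μ).symm
      _ = (ν.map (Prod.map F (id : C → C))).comap (Prod.map F id) := by rw [h']
      _ = ν := hmap.comap_map ν
  subst hμν
  exact Filter.Eventually.of_forall fun _ => rfl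
end
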